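/- arXiv:1506.05901 — 3 statements merged into one kernel-verified Lean document; each statement's English description precedes it below -/
import Mathlib

section
/- For $-1 < \beta \le \alpha \le 0$, the glued football metric $g = e^{2u_{\alpha,\beta}}g_0$ has Gaussian curvature $K(g)(z) = 1$ for $0 < |z| < 1$ and $K(g)(z) = \frac{(\beta+1)^2}{(\alpha+1)^2}$ for $|z| > 1$. In particular its curvature pinching constant is $\rho(g) = \frac{(\beta+1)^2}{(\alpha+1)^2}$. -/
open Real

/-- The conformal factor of the glued football `S²_{α,β}`. -/
noncomputable def gluedFootball (α β : ℝ) (z : ℂ) : ℝ :=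
  if ‖z‖ < 1 then
    Real.log (2 * (α + 1) * ‖z‖ ^ α / (1 + ‖z‖ ^ (2 + 2 * α)))
  else
    Real.log (2 * (α + 1) * ‖z‖ ^ β / (1 + ‖z‖ ^ (2 + 2 * β)))

/-- The Euclidean Laplacian of a function `u : ℂ → ℝ`. -/
noncomputable def lap (u : ℂ → ℝ) (z : ℂ) : ℝ :=
  iteratedFDeriv ℝ 2 u z ![1, 1] + iteratedFDeriv ℝ 2 u z ![Complex.I, Complex.I]
/-!
On each side of the unit circle the conformal factor is, near every point, a radial function
`f(|z|²)` with `f(t) = log a + (γ/2) log t - log (1 + t^(1+γ))`, where `a = 2(α + 1)` and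
`γ ∈ {α, β}`. For radial functions `Δ f(|z|²) = 4 f'(t) + 4 t f''(t)`, which here equals
`-4(1+γ)² t^γ / (1 + t^(1+γ))²`, while `e^{-2u} = (1 + t^(1+γ))² / (a² t^γ)`. So the curvature
is the constant `4(1+γ)²/a² = (γ+1)²/(α+1)²` on each piece, and the pinching constant is the
ratio of the two values because `0 < β + 1 ≤ α + 1`.
-/

open Filter Topology InnerProductSpace Laplacian
open scoped RealInnerProductSpace

section RadialLaplacian

variable {E : Type*} [NormedAddCommGroup E] [InnerProductSpace ℝ E]

theorem iteratedFDeriv_two_comp_norm_sq_apply {f f' : ℝ → ℝ} {f'' : ℝ} {z : E}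
    (hf : ∀ᶠ s in 𝓝 (‖z‖ ^ 2), HasDerivAt f (f' s) s) (hf' : HasDerivAt f' f'' (‖z‖ ^ 2))
    (v : E) :
    iteratedFDeriv ℝ 2 (fun w => f (‖w‖ ^ 2)) z ![v, v]
      = 2 * f' (‖z‖ ^ 2) * ‖v‖ ^ 2 + 4 * f'' * ⟪z, v⟫ ^ 2 := by
  have hfderiv : fderiv ℝ (fun w => f (‖w‖ ^ 2)) =ᶠ[𝓝 z]
      fun w => f' (‖w‖ ^ 2) • (2 • innerSL ℝ w) :=
    (((continuous_norm.pow 2).tendsto z).eventually hf).mono fun w hw =>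
      (hw.comp_hasFDerivAt w (hasStrictFDerivAt_norm_sq w).hasFDerivAt).fderiv
  have hsecond : HasFDerivAt (fun w => f' (‖w‖ ^ 2) • (2 • innerSL ℝ w))
      (f' (‖z‖ ^ 2) • (2 • innerSL ℝ) + (f'' • 2 • innerSL ℝ z).smulRight (2 • innerSL ℝ z)) z :=
    (hf'.comp_hasFDerivAt z (hasStrictFDerivAt_norm_sq z).hasFDerivAt).smul
      ((2 • innerSL ℝ (E := E)).hasFDerivAt (x := z))
  rw [iteratedFDeriv_two_apply, hfderiv.fderiv_eq, hsecond.fderiv]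
  simp only [Matrix.cons_val_zero, Matrix.cons_val_one, add_apply, smul_apply,
    ContinuousLinearMap.smulRight_apply, innerSL_apply_apply, smul_eq_mul, nsmul_eq_mul]
  rw [innerSL_apply_apply, real_inner_self_eq_norm_sq]
  ring

theorem laplacian_comp_norm_sq [FiniteDimensional ℝ E] {f f' : ℝ → ℝ} {f'' : ℝ} {z : E}
    (hf : ∀ᶠ s in 𝓝 (‖z‖ ^ 2), HasDerivAt f (f' s) s) (hf' : HasDerivAt f' f'' (‖z‖ ^ 2)) :
    (Δ fun w : E => f (‖w‖ ^ 2)) z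
      = 2 * Module.finrank ℝ E * f' (‖z‖ ^ 2) + 4 * ‖z‖ ^ 2 * f'' := by
  rw [laplacian_eq_iteratedFDeriv_stdOrthonormalBasis]
  simp only [iteratedFDeriv_two_comp_norm_sq_apply hf hf', Finset.sum_add_distrib,
    ← Finset.mul_sum, (stdOrthonormalBasis ℝ E).sum_sq_inner_left, OrthonormalBasis.norm_eq_one,
    one_pow, Finset.sum_const, Finset.card_univ, Fintype.card_fin, nsmul_eq_mul]
  ring

end RadialLaplacian

theorem lap_eq_laplacian (u : ℂ → ℝ) : lap u = Δ u := by
  rw [laplacian_eq_iteratedFDeriv_complexPlane]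
  rfl

theorem lap_comp_norm_sq {f f' : ℝ → ℝ} {f'' : ℝ} {z : ℂ}
    (hf : ∀ᶠ s in 𝓝 (‖z‖ ^ 2), HasDerivAt f (f' s) s) (hf' : HasDerivAt f' f'' (‖z‖ ^ 2)) :
    lap (fun w => f (‖w‖ ^ 2)) z = 4 * f' (‖z‖ ^ 2) + 4 * ‖z‖ ^ 2 * f'' := by
  rw [lap_eq_laplacian, laplacian_comp_norm_sq hf hf', Complex.finrank_real_complex]
  ring

/-- The conformal factor `log (a |z|^γ / (1 + |z|^(2+2γ)))` in the variable `t = |z|²`. -/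
noncomputable def footballProfile (a γ t : ℝ) : ℝ :=
  log a + γ / 2 * log t - log (1 + t ^ (1 + γ))

section FootballProfile

variable {a γ t : ℝ}

theorem hasDerivAt_rpow_one_add (γ : ℝ) (ht : 0 < t) :
    HasDerivAt (fun s : ℝ => s ^ (1 + γ)) ((1 + γ) * t ^ γ) t := by
  simpa using Real.hasDerivAt_rpow_const (x := t) (p := 1 + γ) (Or.inl ht.ne')

theorem hasDerivAt_footballProfile (a γ : ℝ) (ht : 0 < t) :
    HasDerivAt (footballProfile a γ)
      (γ / 2 * t⁻¹ - (1 + γ) * t ^ γ / (1 + t ^ (1 + γ))) t :=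
  (((Real.hasDerivAt_log ht.ne').const_mul (γ / 2)).const_add (log a)).sub
    (((hasDerivAt_rpow_one_add γ ht).const_add 1).log (by positivity))

theorem lap_footballProfile (a γ : ℝ) {z : ℂ} (hz : z ≠ 0) :
    lap (fun w => footballProfile a γ (‖w‖ ^ 2)) z
      = -4 * (1 + γ) ^ 2 * (‖z‖ ^ 2) ^ γ / (1 + (‖z‖ ^ 2) ^ (1 + γ)) ^ 2 := by
  set t := ‖z‖ ^ 2 with ht_def
  have ht : 0 < t := by positivity
  have hf : ∀ᶠ s in 𝓝 t, HasDerivAt (footballProfile a γ)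
      (γ / 2 * s⁻¹ - (1 + γ) * s ^ γ / (1 + s ^ (1 + γ))) s :=
    (eventually_gt_nhds ht).mono fun s hs => hasDerivAt_footballProfile a γ hs
  have hf' := ((hasDerivAt_inv ht.ne').const_mul (γ / 2)).sub
    ((((Real.hasDerivAt_rpow_const (p := γ) (Or.inl ht.ne')).const_mul (1 + γ))).div
      ((hasDerivAt_rpow_one_add γ ht).const_add 1) (by positivity))
  rw [lap_comp_norm_sq hf hf', ← ht_def, Real.rpow_add ht, Real.rpow_sub ht, Real.rpow_one]
  field_simp
  ring

theorem exp_neg_two_mul_footballProfile (ha : a ≠ 0) (ht : 0 < t) :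
    exp (-2 * footballProfile a γ t) = (1 + t ^ (1 + γ)) ^ 2 / (a ^ 2 * t ^ γ) := by
  have hlog : -2 * footballProfile a γ t
      = log ((1 + t ^ (1 + γ)) ^ 2) - log (a ^ 2) - log (t ^ γ) := by
    rw [footballProfile, Real.log_pow, Real.log_pow, Real.log_rpow ht]
    push_cast
    ring
  rw [hlog, exp_sub, exp_sub, exp_log (by positivity), exp_log (by positivity),
    exp_log (by positivity), div_div]

end FootballProfile

/-- The Gaussian curvature of the metric `e^{2u} |dz|²`. -/
noncomputable def conformalCurvature (u : ℂ → ℝ) (z : ℂ) : ℝ :=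
  -exp (-2 * u z) * lap u z

theorem conformalCurvature_of_eventuallyEq_footballProfile {u : ℂ → ℝ} {a γ : ℝ} {z : ℂ}
    (ha : a ≠ 0) (hz : z ≠ 0) (hu : u =ᶠ[𝓝 z] fun w => footballProfile a γ (‖w‖ ^ 2)) :
    conformalCurvature u z = 4 * (1 + γ) ^ 2 / a ^ 2 := by
  have hlap : lap u z = lap (fun w => footballProfile a γ (‖w‖ ^ 2)) z := by
    simp only [lap_eq_laplacian, (laplacian_congr_nhds hu).eq_of_nhds]
  have ht : 0 < ‖z‖ ^ 2 := by positivity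
  rw [conformalCurvature, hlap, hu.eq_of_nhds, lap_footballProfile a γ hz,
    exp_neg_two_mul_footballProfile ha ht]
  field_simp

theorem log_mul_rpow_div_eq_footballProfile {a γ r : ℝ} (ha : a ≠ 0) (hr : 0 < r) :
    log (a * r ^ γ / (1 + r ^ (2 + 2 * γ))) = footballProfile a γ (r ^ 2) := by
  have hsq : r ^ 2 = r ^ (2 : ℝ) := (Real.rpow_natCast r 2).symm
  rw [footballProfile, hsq, ← Real.rpow_mul hr.le, Real.log_div (by positivity) (by positivity),
    Real.log_mul ha (by positivity), Real.log_rpow hr, Real.log_rpow hr]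
  ring_nf

section GluedFootball

variable {α β : ℝ} {z : ℂ}

theorem gluedFootball_eventuallyEq_of_lt (hα : α + 1 ≠ 0) (hz : z ≠ 0) (hz1 : ‖z‖ < 1) :
    gluedFootball α β =ᶠ[𝓝 z] fun w => footballProfile (2 * (α + 1)) α (‖w‖ ^ 2) := by
  filter_upwards [eventually_ne_nhds hz,
    continuous_norm.continuousAt.eventually (eventually_lt_nhds hz1)] with w hw hw1
  rw [gluedFootball, if_pos hw1,
    log_mul_rpow_div_eq_footballProfile (mul_ne_zero two_ne_zero hα) (norm_pos_iff.mpr hw)]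

theorem gluedFootball_eventuallyEq_of_one_lt (hα : α + 1 ≠ 0) (hz1 : 1 < ‖z‖) :
    gluedFootball α β =ᶠ[𝓝 z] fun w => footballProfile (2 * (α + 1)) β (‖w‖ ^ 2) := by
  filter_upwards [continuous_norm.continuousAt.eventually (eventually_gt_nhds hz1)] with w hw1
  rw [gluedFootball, if_neg hw1.le.not_gt,
    log_mul_rpow_div_eq_footballProfile (mul_ne_zero two_ne_zero hα) (by linarith)]

theorem conformalCurvature_gluedFootball_of_lt (hα : α + 1 ≠ 0) (hz : z ≠ 0) (hz1 : ‖z‖ < 1) :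
    conformalCurvature (gluedFootball α β) z = 1 := by
  rw [conformalCurvature_of_eventuallyEq_footballProfile (mul_ne_zero two_ne_zero hα) hz
    (gluedFootball_eventuallyEq_of_lt hα hz hz1)]
  field_simp
  ring

theorem conformalCurvature_gluedFootball_of_one_lt (hα : α + 1 ≠ 0) (hz1 : 1 < ‖z‖) :
    conformalCurvature (gluedFootball α β) z = (β + 1) ^ 2 / (α + 1) ^ 2 := by
  have hz : z ≠ 0 := norm_pos_iff.mp (by linarith)
  rw [conformalCurvature_of_eventuallyEq_footballProfile (mul_ne_zero two_ne_zero hα) hz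
    (gluedFootball_eventuallyEq_of_one_lt hα hz1)]
  field_simp
  ring

theorem setOf_conformalCurvature_gluedFootball (hα : α + 1 ≠ 0) :
    {k | ∃ z : ℂ, z ≠ 0 ∧ ‖z‖ ≠ 1 ∧ k = conformalCurvature (gluedFootball α β) z}
      = {(β + 1) ^ 2 / (α + 1) ^ 2, 1} := by
  ext k
  constructor
  · rintro ⟨z, hz, hz1, rfl⟩
    rcases hz1.lt_or_gt with hlt | hgt
    · exact Or.inr (conformalCurvature_gluedFootball_of_lt hα hz hlt)
    · exact Or.inl (conformalCurvature_gluedFootball_of_one_lt hα hgt)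
  · rintro (rfl | rfl)
    · exact ⟨2, two_ne_zero, by norm_num,
        (conformalCurvature_gluedFootball_of_one_lt hα (by norm_num)).symm⟩
    · exact ⟨1 / 2, by norm_num, by norm_num,
        (conformalCurvature_gluedFootball_of_lt hα (by norm_num) (by norm_num)).symm⟩

end GluedFootball

theorem stmt4_general (α β : ℝ) (h1 : -1 < β) (h2 : β ≤ α) :
    (∀ z : ℂ, z ≠ 0 → ‖z‖ < 1 →
      -Real.exp (-2 * gluedFootball α β z) * lap (gluedFootball α β) z = 1) ∧
    (∀ z : ℂ, 1 < ‖z‖ →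
      -Real.exp (-2 * gluedFootball α β z) * lap (gluedFootball α β) z
        = (β + 1) ^ 2 / (α + 1) ^ 2) ∧
    IsLeast {k : ℝ | ∃ z : ℂ, z ≠ 0 ∧ ‖z‖ ≠ 1 ∧
        k = -Real.exp (-2 * gluedFootball α β z) * lap (gluedFootball α β) z}
      ((β + 1) ^ 2 / (α + 1) ^ 2) ∧
    IsGreatest {k : ℝ | ∃ z : ℂ, z ≠ 0 ∧ ‖z‖ ≠ 1 ∧
        k = -Real.exp (-2 * gluedFootball α β z) * lap (gluedFootball α β) z} 1 := by
  have hα : α + 1 ≠ 0 := by linarith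
  have hρ : (β + 1) ^ 2 / (α + 1) ^ 2 ≤ 1 :=
    div_le_one_of_le₀ (pow_le_pow_left₀ (by linarith) (by linarith) 2) (sq_nonneg _)
  have hvalues := setOf_conformalCurvature_gluedFootball (β := β) hα
  simp only [conformalCurvature] at hvalues
  refine ⟨fun z hz hz1 => conformalCurvature_gluedFootball_of_lt hα hz hz1,
    fun z hz1 => conformalCurvature_gluedFootball_of_one_lt hα hz1, ?_, ?_⟩
  · rw [hvalues]
    have h := isLeast_pair (a := (β + 1) ^ 2 / (α + 1) ^ 2) (b := (1 : ℝ))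
    rwa [min_eq_left hρ] at h
  · rw [hvalues]
    have h := isGreatest_pair (a := (β + 1) ^ 2 / (α + 1) ^ 2) (b := (1 : ℝ))
    rwa [max_eq_right hρ] at h

theorem stmt4 (α β : ℝ) (h1 : -1 < β) (h2 : β ≤ α) (h3 : α ≤ 0) :
    (∀ z : ℂ, z ≠ 0 → ‖z‖ < 1 →
      -Real.exp (-2 * gluedFootball α β z) * lap (gluedFootball α β) z = 1) ∧
    (∀ z : ℂ, 1 < ‖z‖ →
      -Real.exp (-2 * gluedFootball α β z) * lap (gluedFootball α β) z
        = (β + 1) ^ 2 / (α + 1) ^ 2) ∧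
    IsLeast {k : ℝ | ∃ z : ℂ, z ≠ 0 ∧ ‖z‖ ≠ 1 ∧
        k = -Real.exp (-2 * gluedFootball α β z) * lap (gluedFootball α β) z}
      ((β + 1) ^ 2 / (α + 1) ^ 2) ∧
    IsGreatest {k : ℝ | ∃ z : ℂ, z ≠ 0 ∧ ‖z‖ ≠ 1 ∧
        k = -Real.exp (-2 * gluedFootball α β z) * lap (gluedFootball α β) z} 1 :=
  stmt4_general α β h1 h2
end

section
/- Let $a,b > 0$ with $a \le b$, let $H \in \mathbb{R}$, and let $A : (-\infty, H] \to \mathbb{R}$ be a nonnegative absolutely continuous function with $A(H) = 0$ satisfying the differential inequality $\frac{b}{4a\pi}A(t)^2 \ge \frac{b}{4a\pi}A(t)A'(t) + A(t)$ for almost every $t$, with $A' \le 0$ and $A>0$ for $t<H$. Then $A(t) \ge \frac{4a\pi}{b}\big(1 - e^{t-H}\big)$ for all $t \le H$. -/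
/-!
Dividing the differential inequality by `b / (4aπ) · A > 0` gives `A' ≤ A - c` with
`c = 4aπ/b`, and also `A' ≤ 0`. The latter makes `A` antitone, so `A'` is integrable and `A` is
absolutely continuous; then `(A - c) e^{-t}` has nonpositive derivative, and comparing its values
at `t` and at `H` (where it is `-c e^{-H}`) gives `A(t) - c ≥ -c e^{t-H}`.
-/

open Real MeasureTheory Set Filter

theorem intervalIntegral_nonpos_of_ae_Ioo {f : ℝ → ℝ} {a b : ℝ} (hab : a ≤ b)
    (hf : ∀ᵐ x, x ∈ Ioo a b → f x ≤ 0) : ∫ x in a..b, f x ≤ 0 := by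
  rw [intervalIntegral.integral_of_le hab, integral_Ioc_eq_integral_Ioo]
  exact integral_nonpos_of_ae ((ae_restrict_iff' measurableSet_Ioo).2 hf)

namespace AbsolutelyContinuousOnInterval

theorem congr {f g : ℝ → ℝ} {a b : ℝ} (hf : AbsolutelyContinuousOnInterval f a b)
    (hfg : EqOn f g (uIcc a b)) : AbsolutelyContinuousOnInterval g a b := by
  refine hf.congr' (eventually_inf_principal.2 (Eventually.of_forall fun E hE => ?_))
  refine Finset.sum_congr rfl fun i hi => ?_
  rw [hfg (hE.1 i hi).1, hfg (hE.1 i hi).2]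

theorem mul_exp_le_of_deriv_le {f : ℝ → ℝ} {a b : ℝ} (hab : a ≤ b)
    (hf : AbsolutelyContinuousOnInterval f a b)
    (hf' : ∀ᵐ x, x ∈ Ioo a b → deriv f x ≤ f x) :
    f b * exp (a - b) ≤ f a := by
  have hexp : AbsolutelyContinuousOnInterval (fun x => exp (-x)) a b :=
    (by fun_prop : ContDiff ℝ 1 fun x => exp (-x)).contDiffOn.absolutelyContinuousOnInterval
  have hparts := hexp.integral_deriv_mul_eq_sub hf
  have hnonpos :
      ∫ x in a..b, deriv (fun x => exp (-x)) x * f x + exp (-x) * deriv f x ≤ 0 := by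
    refine intervalIntegral_nonpos_of_ae_Ioo hab (hf'.mono fun x hx hxab => ?_)
    have hder : deriv (fun x => exp (-x)) x = -exp (-x) := by
      simpa using ((hasDerivAt_neg x).exp).deriv
    rw [hder]
    nlinarith [hx hxab, exp_pos (-x)]
  have hmul : exp (-b) * f b ≤ exp (-a) * f a := by linarith
  calc f b * exp (a - b) = exp a * (exp (-b) * f b) := by
        rw [sub_eq_add_neg, exp_add]; ring
    _ ≤ exp a * (exp (-a) * f a) := by gcongr
    _ = f a := by rw [← mul_assoc, ← exp_add, add_neg_cancel, exp_zero, one_mul]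

end AbsolutelyContinuousOnInterval

theorem absolutelyContinuousOnInterval_of_eq_add_integral {f f' : ℝ → ℝ} {a b : ℝ}
    (hf' : IntervalIntegrable f' volume a b)
    (hf : ∀ x ∈ uIcc a b, f x = f a + ∫ t in a..x, f' t) :
    AbsolutelyContinuousOnInterval f a b :=
  ((contDiffOn_const (c := f a)).absolutelyContinuousOnInterval.add
    (hf'.absolutelyContinuousOnInterval_intervalIntegral left_mem_uIcc)).congr
    fun x hx => (hf x hx).symm

theorem antitoneOn_of_sub_eq_integral_deriv {f : ℝ → ℝ} {a b : ℝ}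
    (hf : ∀ x y, a ≤ x → x ≤ y → y ≤ b → f y - f x = ∫ t in x..y, deriv f t)
    (hf' : ∀ᵐ t, t ∈ Ioo a b → deriv f t ≤ 0) : AntitoneOn f (Icc a b) := by
  intro x hx y hy hxy
  have := intervalIntegral_nonpos_of_ae_Ioo hxy <|
    hf'.mono fun t ht htxy => ht ⟨hx.1.trans_lt htxy.1, htxy.2.trans_le hy.2⟩
  linarith [hf x y hx.1 hxy hy.2]

theorem AntitoneOn.intervalIntegrable_deriv {f : ℝ → ℝ} {a b : ℝ}
    (hf : AntitoneOn f (uIcc a b)) :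
    IntervalIntegrable (deriv f) volume a b := by
  simpa only [deriv.fun_neg', Pi.neg_def, neg_neg] using hf.neg.intervalIntegrable_deriv.neg

theorem stmt9_general (a b H : ℝ) (ha : 0 < a) (hab : a ≤ b) (A : ℝ → ℝ)
    (hAC : ∀ s t : ℝ, s ≤ t → t ≤ H → A t - A s = ∫ r in s..t, deriv A r)
    (hpos : ∀ t < H, 0 < A t) (hAH : A H = 0)
    (hineq : ∀ᵐ t : ℝ, t < H →
      b / (4 * a * π) * (A t) ^ 2 ≥ b / (4 * a * π) * A t * deriv A t + A t ∧ deriv A t ≤ 0) :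
    ∀ t ≤ H, A t ≥ 4 * a * π / b * (1 - Real.exp (t - H)) := by
  intro t htH
  set c := 4 * a * π / b
  have hb : 0 < b := ha.trans_le hab
  have hC : 0 < b / (4 * a * π) := by have := pi_pos; positivity
  have hcC : c * (b / (4 * a * π)) = 1 := by simp only [c]; field_simp
  have hderiv : ∀ᵐ r, r ∈ Ioo t H → deriv A r ≤ A r - c ∧ deriv A r ≤ 0 := by
    filter_upwards [hineq] with r hr hrtH
    obtain ⟨hquad, hmono⟩ := hr hrtH.2
    refine ⟨le_of_mul_le_mul_left ?_ (mul_pos hC (hpos r hrtH.2)), hmono⟩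
    linear_combination hquad + A r * hcC
  have hanti : AntitoneOn A (Icc t H) :=
    antitoneOn_of_sub_eq_integral_deriv (fun x y _ hxy hy => hAC x y hxy hy)
      (hderiv.mono fun r h hr => (h hr).2)
  have hAbs : AbsolutelyContinuousOnInterval A t H :=
    absolutelyContinuousOnInterval_of_eq_add_integral
      (AntitoneOn.intervalIntegrable_deriv (by rwa [uIcc_of_le htH]))
      fun x hx => by rw [uIcc_of_le htH] at hx; linarith [hAC t x hx.1 hx.2]
  have hcomp := (hAbs.fun_sub (contDiffOn_const (c := c)).absolutelyContinuousOnInterval)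
    |>.mul_exp_le_of_deriv_le htH
      (hderiv.mono fun r h hr => by simpa only [deriv_sub_const] using (h hr).1)
  rw [hAH] at hcomp
  linarith

theorem stmt9 (a b H : ℝ) (ha : 0 < a) (hab : a ≤ b) (A : ℝ → ℝ)
    (hcont : ContinuousOn A (Set.Iic H))
    (hAC : ∀ s t : ℝ, s ≤ t → t ≤ H → A t - A s = ∫ r in s..t, deriv A r)
    (hnn : ∀ t ≤ H, 0 ≤ A t) (hpos : ∀ t < H, 0 < A t) (hAH : A H = 0)
    (hineq : ∀ᵐ t : ℝ, t < H →
      b / (4 * a * π) * (A t) ^ 2 ≥ b / (4 * a * π) * A t * deriv A t + A t ∧ deriv A t ≤ 0) :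
    ∀ t ≤ H, A t ≥ 4 * a * π / b * (1 - Real.exp (t - H)) :=
  stmt9_general a b H ha hab A hAC hpos hAH hineq
end

section
/- For $-1 < \beta \le \alpha \le 0$, the glued football metric $g = e^{2u_{\alpha,\beta}}g_0$ has total curvature $\int_{\mathbb{C}} K(g)e^{2u_{\alpha,\beta}}\,dz = 2\pi(2 + \alpha + \beta)$, i.e., it satisfies the conic Gauss–Bonnet formula for the divisor $D = \alpha\cdot 0 + \beta\cdot\infty$ on $S^2$. -/
open Real MeasureTheory

/-!
In polar coordinates the area element of the `c`-football `e^{2u_c}|dz|²` is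
`2π r e^{2u_c(r)} dr`, and `r e^{2u_c(r)} = 4(c+1)² r^{1+2c} / (1 + r^{2+2c})²` is the derivative
of `-2(c+1) / (1 + r^{2+2c})`. Hence the disc `r < 1` and its complement each carry area
`2π(c+1)`. On the glued football the inner part is the `α`-football, and on the outer part the
curvature `(β+1)²/(α+1)²` exactly turns the factor `(α+1)²` of `e^{2u}` into `(β+1)²`, so the
outer part contributes the area `2π(β+1)` of the outer half of the `β`-football.
-/

open Set Filter Topology

noncomputable def footballPrimitive (c y : ℝ) : ℝ := -2 * (c + 1) / (1 + y ^ (2 + 2 * c))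

noncomputable def footballRadialDensity (c y : ℝ) : ℝ :=
  4 * (c + 1) ^ 2 * y ^ (1 + 2 * c) / (1 + y ^ (2 + 2 * c)) ^ 2

lemma one_add_rpow_pos {y : ℝ} (hy : 0 ≤ y) (p : ℝ) : 0 < 1 + y ^ p := by
  linarith [rpow_nonneg hy p]

lemma hasDerivAt_footballPrimitive {c y : ℝ} (hy : 0 < y) :
    HasDerivAt (footballPrimitive c) (footballRadialDensity c y) y := by
  have hden : HasDerivAt (fun y : ℝ => 1 + y ^ (2 + 2 * c))
      ((2 + 2 * c) * y ^ (2 + 2 * c - 1)) y :=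
    (hasDerivAt_rpow_const (Or.inl hy.ne')).const_add 1
  have h := (hden.inv (one_add_rpow_pos hy.le _).ne').const_mul (-2 * (c + 1))
  simp only [Pi.inv_apply, ← div_eq_mul_inv] at h
  refine h.congr_deriv ?_
  rw [footballRadialDensity, show 2 + 2 * c - 1 = 1 + 2 * c by ring]
  field_simp
  ring

lemma continuousOn_footballPrimitive {c : ℝ} (hc : -1 < c) :
    ContinuousOn (footballPrimitive c) (Ici 0) := by
  refine continuousOn_const.div (continuousOn_const.add fun y _ => ?_)
    fun y hy => (one_add_rpow_pos hy _).ne'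
  exact (continuousAt_rpow_const y _ (Or.inr (by linarith))).continuousWithinAt

lemma continuousWithinAt_footballPrimitive {c y : ℝ} (hc : -1 < c) (hy : 0 ≤ y) :
    ContinuousWithinAt (footballPrimitive c) (Ici y) y :=
  ((continuousOn_footballPrimitive hc).continuousWithinAt hy).mono (Ici_subset_Ici.2 hy)

lemma tendsto_footballPrimitive_atTop {c : ℝ} (hc : -1 < c) :
    Tendsto (footballPrimitive c) atTop (𝓝 0) := by
  have hden : Tendsto (fun y : ℝ => 1 + y ^ (2 + 2 * c)) atTop atTop :=
    tendsto_atTop_add_const_left _ _ (tendsto_rpow_atTop (by linarith))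
  have := hden.inv_tendsto_atTop.const_mul (-2 * (c + 1))
  rw [mul_zero] at this
  exact this.congr fun y => by simp only [footballPrimitive, Pi.inv_apply, div_eq_mul_inv]

lemma footballRadialDensity_nonneg (c : ℝ) {y : ℝ} (hy : 0 ≤ y) :
    0 ≤ footballRadialDensity c y :=
  div_nonneg (mul_nonneg (by positivity) (rpow_nonneg hy _)) (sq_nonneg _)

lemma integrableOn_footballRadialDensity_Ioc {c : ℝ} (hc : -1 < c) :
    IntegrableOn (footballRadialDensity c) (Ioc 0 1) :=
  intervalIntegral.integrableOn_deriv_of_nonneg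
    ((continuousOn_footballPrimitive hc).mono Icc_subset_Ici_self)
    (fun _ hy => hasDerivAt_footballPrimitive hy.1)
    (fun _ hy => footballRadialDensity_nonneg c hy.1.le)

lemma integral_footballRadialDensity_Ioc {c : ℝ} (hc : -1 < c) :
    ∫ y in Ioc 0 1, footballRadialDensity c y = c + 1 := by
  rw [← intervalIntegral.integral_of_le zero_le_one,
    intervalIntegral.integral_eq_sub_of_hasDeriv_right_of_le zero_le_one
      ((continuousOn_footballPrimitive hc).mono Icc_subset_Ici_self)
      (fun _ hy => (hasDerivAt_footballPrimitive hy.1).hasDerivWithinAt)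
      ((intervalIntegrable_iff_integrableOn_Ioc_of_le zero_le_one).2
        (integrableOn_footballRadialDensity_Ioc hc)),
    footballPrimitive, footballPrimitive, one_rpow, zero_rpow (by linarith)]
  ring

lemma integrableOn_footballRadialDensity_Ioi {c : ℝ} (hc : -1 < c) :
    IntegrableOn (footballRadialDensity c) (Ioi 1) :=
  integrableOn_Ioi_deriv_of_nonneg
    (continuousWithinAt_footballPrimitive hc zero_le_one)
    (fun _ hy => hasDerivAt_footballPrimitive (zero_lt_one.trans hy))
    (fun _ hy => footballRadialDensity_nonneg c (zero_le_one.trans hy.out.le))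
    (tendsto_footballPrimitive_atTop hc)

lemma integral_footballRadialDensity_Ioi {c : ℝ} (hc : -1 < c) :
    ∫ y in Ioi 1, footballRadialDensity c y = c + 1 := by
  rw [integral_Ioi_of_hasDerivAt_of_nonneg
      (continuousWithinAt_footballPrimitive hc zero_le_one)
      (fun _ hy => hasDerivAt_footballPrimitive (zero_lt_one.trans hy))
      (fun _ hy => footballRadialDensity_nonneg c (zero_le_one.trans hy.out.le))
      (tendsto_footballPrimitive_atTop hc),
    footballPrimitive, one_rpow]
  ring

lemma mul_exp_two_mul_log_eq_footballRadialDensity {a c y : ℝ} (ha : a ≠ -1) (hy : 0 < y) :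
    y * ((c + 1) ^ 2 / (a + 1) ^ 2 *
        exp (2 * log (2 * (a + 1) * y ^ c / (1 + y ^ (2 + 2 * c))))) =
      footballRadialDensity c y := by
  have ha' : a + 1 ≠ 0 := fun h => ha (by linarith)
  have hden := one_add_rpow_pos hy.le (2 + 2 * c)
  set A := 2 * (a + 1) * y ^ c / (1 + y ^ (2 + 2 * c)) with hA_def
  have hA : A ≠ 0 := by
    have := (rpow_pos_of_pos hy c).ne'
    positivity
  have hexp : exp (2 * log A) = A ^ 2 := by
    rw [show 2 * log A = log (A ^ 2) by rw [log_pow]; norm_num, exp_log (sq_pos_of_ne_zero hA)]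
  have hpow : y * (y ^ c) ^ 2 = y ^ (1 + 2 * c) := by
    rw [← rpow_natCast, ← rpow_mul hy.le, rpow_add hy, rpow_one]
    ring_nf
  rw [hexp, hA_def, footballRadialDensity, ← hpow]
  field_simp
  ring

lemma integral_complex_fun_norm (f : ℝ → ℝ) :
    ∫ z : ℂ, f ‖z‖ = 2 * π * ∫ r in Ioi 0, r * f r := by
  rw [integral_fun_norm_addHaar volume f, Complex.finrank_real_complex, measureReal_def,
    Complex.volume_ball]
  simp [smul_eq_mul, ← mul_assoc]

lemma integral_Ioi_ite_lt_one {f g : ℝ → ℝ} (hf : IntegrableOn f (Ioc 0 1))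
    (hg : IntegrableOn g (Ioi 1)) :
    ∫ r in Ioi 0, (if r < 1 then f r else g r) = (∫ r in Ioc 0 1, f r) + ∫ r in Ioi 1, g r := by
  have hf' : EqOn (fun r => if r < 1 then f r else g r) f (Ioo 0 1) := fun r hr => if_pos hr.2
  have hg' : EqOn (fun r => if r < 1 then f r else g r) g (Ici 1) :=
    fun r hr => if_neg (not_lt.2 hr)
  rw [← Ioo_union_Ici_eq_Ioi zero_lt_one,
    setIntegral_union ((Iio_disjoint_Ici le_rfl).mono_left Ioo_subset_Iio_self) measurableSet_Ici
      ((hf.mono_set Ioo_subset_Ioc_self).congr_fun hf'.symm measurableSet_Ioo)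
      (((integrableOn_Ici_iff_integrableOn_Ioi (f := g)).2 hg).congr_fun hg'.symm
        measurableSet_Ici),
    setIntegral_congr_fun measurableSet_Ioo hf', setIntegral_congr_fun measurableSet_Ici hg',
    integral_Ioc_eq_integral_Ioo, integral_Ici_eq_integral_Ioi]

lemma gluedFootball_ofReal_norm (α β : ℝ) (z : ℂ) :
    gluedFootball α β (‖z‖ : ℂ) = gluedFootball α β z := by
  simp [gluedFootball]

theorem stmt18_general (α β : ℝ) (h1 : -1 < β) (h2 : β ≤ α) :
    (∫ z : ℂ, (if ‖z‖ < 1 then (1 : ℝ) else (β + 1) ^ 2 / (α + 1) ^ 2)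
        * Real.exp (2 * gluedFootball α β z))
      = 2 * π * (2 + α + β) := by
  have hα : -1 < α := h1.trans_le h2
  set F : ℝ → ℝ := fun r =>
    (if r < 1 then (1 : ℝ) else (β + 1) ^ 2 / (α + 1) ^ 2) * exp (2 * gluedFootball α β r)
  have hF : ∀ r ∈ Ioi (0 : ℝ),
      r * F r = if r < 1 then footballRadialDensity α r else footballRadialDensity β r := by
    intro r (hr : 0 < r)
    have hα' : α ≠ -1 := hα.ne'
    by_cases h : r < 1
    · have hsq : (α + 1) ^ 2 ≠ 0 := pow_ne_zero 2 (by linarith : 0 < α + 1).ne'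
      simpa [F, h, gluedFootball, abs_of_pos hr, div_self hsq] using
        mul_exp_two_mul_log_eq_footballRadialDensity (c := α) hα' hr
    · simpa [F, h, gluedFootball, abs_of_pos hr] using
        mul_exp_two_mul_log_eq_footballRadialDensity (c := β) hα' hr
  calc _ = ∫ z : ℂ, F ‖z‖ := by simp only [F, gluedFootball_ofReal_norm]
    _ = 2 * π * ∫ r in Ioi 0, r * F r := integral_complex_fun_norm F
    _ = 2 * π * ((α + 1) + (β + 1)) := by
      rw [setIntegral_congr_fun measurableSet_Ioi hF,
        integral_Ioi_ite_lt_one (integrableOn_footballRadialDensity_Ioc hα)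
          (integrableOn_footballRadialDensity_Ioi h1),
        integral_footballRadialDensity_Ioc hα, integral_footballRadialDensity_Ioi h1]
    _ = 2 * π * (2 + α + β) := by ring

theorem stmt18 (α β : ℝ) (h1 : -1 < β) (h2 : β ≤ α) (h3 : α ≤ 0) :
    (∫ z : ℂ, (if ‖z‖ < 1 then (1 : ℝ) else (β + 1) ^ 2 / (α + 1) ^ 2)
        * Real.exp (2 * gluedFootball α β z))
      = 2 * π * (2 + α + β) :=
  stmt18_general α β h1 h2
end
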